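/- arXiv:1905.13229 — 4 statements merged into one kernel-verified Lean document; each statement's English description precedes it below -/
import Mathlib

section
/- If P and Q are product distributions on R^d whose per-coordinate variances are each at most σ², and d_TV(P,Q) ≤ 1/2, then the ℓ1 distance between their mean vectors satisfies ‖E_P[X] − E_Q[X]‖₁ ≤ 4√(dσ²). -/
/-!
Let `c` be the coordinatewise sign vector of `m_P - m_Q` and `f x = ⟨c, x⟩`. The means of `f`
under `P` and `Q` differ by `L = ‖m_P - m_Q‖₁`, and since the coordinates are independent under
both product measures, `Var f ≤ dσ²` under each. By Chebyshev the threshold event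
`{f ≥ E_P f - L/2}` has `P`-probability at least `1 - 4dσ²/L²` and `Q`-probability at most
`4dσ²/L²`, so `1/2 ≥ d_TV(P, Q) ≥ 1 - 8dσ²/L²`, i.e. `L² ≤ 16dσ²`.
-/

open MeasureTheory

/-- Total variation distance between two measures: `sup_S |P(S) - Q(S)|`. -/
noncomputable def tvDist {Ω : Type*} [MeasurableSpace Ω] (P Q : Measure Ω) : ℝ :=
  ⨆ S : Set Ω, |(P S).toReal - (Q S).toReal|

open ProbabilityTheory

section TestStatistic

variable {Ω : Type*} [MeasurableSpace Ω]

lemma abs_measureReal_sub_le_tvDist (P Q : Measure Ω) [IsFiniteMeasure P] [IsFiniteMeasure Q]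
    (S : Set Ω) : |P.real S - Q.real S| ≤ tvDist P Q := by
  refine le_ciSup (f := fun S => |P.real S - Q.real S|) ⟨P.real .univ + Q.real .univ, ?_⟩ S
  rintro _ ⟨T, rfl⟩
  have hP := measureReal_mono (μ := P) (Set.subset_univ T)
  have hQ := measureReal_mono (μ := Q) (Set.subset_univ T)
  have hP₀ := measureReal_nonneg (μ := P) (s := T)
  have hQ₀ := measureReal_nonneg (μ := Q) (s := T)
  rw [abs_sub_le_iff]
  constructor <;> linarith

lemma measureReal_le_variance_div_sq {μ : Measure Ω} [IsFiniteMeasure μ] {X : Ω → ℝ}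
    (hX : MemLp X 2 μ) {c : ℝ} (hc : 0 < c) :
    μ.real {ω | c ≤ |X ω - μ[X]|} ≤ Var[X; μ] / c ^ 2 :=
  ENNReal.toReal_le_of_le_ofReal (by have := variance_nonneg X μ; positivity)
    (meas_ge_le_variance_div_sq hX hc)

lemma sq_integral_sub_integral_mul_one_sub_tvDist_le {P Q : Measure Ω} [IsProbabilityMeasure P]
    [IsProbabilityMeasure Q] {f : Ω → ℝ} {v : ℝ} (hfP : MemLp f 2 P) (hfQ : MemLp f 2 Q)
    (hvP : Var[f; P] ≤ v) (hvQ : Var[f; Q] ≤ v) (hQP : Q[f] ≤ P[f]) :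
    (P[f] - Q[f]) ^ 2 * (1 - tvDist P Q) ≤ 8 * v := by
  set L := P[f] - Q[f]
  obtain hL | hL : L = 0 ∨ 0 < L := (sub_nonneg.2 hQP).eq_or_lt'
  · simpa [hL] using (variance_nonneg f P).trans hvP
  set S := {x | P[f] - L / 2 ≤ f x}
  have hPSc : P.real Sᶜ ≤ v / (L / 2) ^ 2 := by
    refine le_trans (measureReal_mono fun x hx => ?_) <|
      (measureReal_le_variance_div_sq hfP (half_pos hL)).trans (by gcongr)
    simp only [S, Set.mem_compl_iff, Set.mem_ofPred_eq, not_le] at hx ⊢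
    rw [abs_sub_comm]
    exact le_abs.2 (Or.inl (by linarith))
  have hQS : Q.real S ≤ v / (L / 2) ^ 2 := by
    refine le_trans (measureReal_mono fun x hx => ?_) <|
      (measureReal_le_variance_div_sq hfQ (half_pos hL)).trans (by gcongr)
    simp only [S, Set.mem_ofPred_eq] at hx ⊢
    exact le_abs.2 (Or.inl (by linarith))
  have hPS : 1 ≤ P.real S + P.real Sᶜ := by
    simpa [Set.union_compl_self] using measureReal_union_le (μ := P) S Sᶜ
  have htv := (le_abs_self _).trans (abs_measureReal_sub_le_tvDist P Q S)
  have hgap : 1 - tvDist P Q ≤ 8 * v / L ^ 2 := by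
    have : v / (L / 2) ^ 2 = 8 * v / L ^ 2 / 2 := by field_simp; ring
    linarith
  rwa [le_div_iff₀ (by positivity), mul_comm] at hgap

end TestStatistic

section LinearStatisticOnProduct

variable {ι : Type*} [Fintype ι] {μ : ι → Measure ℝ} [∀ i, IsProbabilityMeasure (μ i)]

lemma memLp_sum_mul_eval (h : ∀ i, MemLp id 2 (μ i)) (c : ι → ℝ) :
    MemLp (fun x : ι → ℝ => ∑ i, c i * x i) 2 (Measure.pi μ) :=
  memLp_finsetSum _ fun i _ =>
    ((h i).comp_measurePreserving (measurePreserving_eval μ i)).const_mul (c i)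

lemma integral_sum_mul_eval (h : ∀ i, Integrable id (μ i)) (c : ι → ℝ) :
    ∫ x, ∑ i, c i * x i ∂Measure.pi μ = ∑ i, c i * ∫ x, x ∂μ i := by
  rw [integral_finsetSum _ fun i _ => (integrable_eval (h i)).const_mul (c i)]
  simp only [integral_const_mul, integral_eval]

lemma variance_sum_mul_eval (h : ∀ i, MemLp id 2 (μ i)) (c : ι → ℝ) :
    Var[fun x : ι → ℝ => ∑ i, c i * x i; Measure.pi μ] = ∑ i, c i ^ 2 * Var[id; μ i] := by
  have := variance_sum_pi (μ := μ) (X := fun i x => c i * x) fun i => (h i).const_mul (c i)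
  rw [← Finset.sum_fn, this]
  exact Finset.sum_congr rfl fun i _ => variance_const_mul (c i) id (μ i)

lemma variance_sum_mul_eval_le (h : ∀ i, MemLp id 2 (μ i)) {c : ι → ℝ} (hc : ∀ i, c i ^ 2 ≤ 1)
    {v : ℝ} (hv : ∀ i, Var[id; μ i] ≤ v) :
    Var[fun x : ι → ℝ => ∑ i, c i * x i; Measure.pi μ] ≤ Fintype.card ι * v := by
  rw [variance_sum_mul_eval h, ← nsmul_eq_mul, ← Finset.card_univ, ← Finset.sum_const]
  exact Finset.sum_le_sum fun i _ =>
    (mul_le_of_le_one_left (variance_nonneg id (μ i)) (hc i)).trans (hv i)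

end LinearStatisticOnProduct

theorem product_tv_mean_l1_general (d : ℕ) (σ : ℝ)
    (μ ν : Fin d → Measure ℝ)
    (hμprob : ∀ i, IsProbabilityMeasure (μ i)) (hνprob : ∀ i, IsProbabilityMeasure (ν i))
    (hμL2 : ∀ i, MemLp id 2 (μ i)) (hνL2 : ∀ i, MemLp id 2 (ν i))
    (hμvar : ∀ i, ProbabilityTheory.variance id (μ i) ≤ σ ^ 2)
    (hνvar : ∀ i, ProbabilityTheory.variance id (ν i) ≤ σ ^ 2)
    (htv : tvDist (Measure.pi μ) (Measure.pi ν) ≤ 1 / 2) :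
    ∑ i, |(∫ x, x ∂(μ i)) - ∫ x, x ∂(ν i)| ≤ 4 * Real.sqrt (d * σ ^ 2) := by
  let c (i : Fin d) : ℝ := SignType.sign ((∫ x, x ∂(μ i)) - ∫ x, x ∂(ν i))
  have hc (i : Fin d) : c i ^ 2 ≤ 1 := by
    obtain ⟨s, hs⟩ : ∃ s : SignType, c i = s := ⟨_, rfl⟩
    rw [hs]
    cases s <;> norm_num
  have hgap : (∫ x, ∑ i, c i * x i ∂Measure.pi μ) - ∫ x, ∑ i, c i * x i ∂Measure.pi ν
      = ∑ i, |(∫ x, x ∂(μ i)) - ∫ x, x ∂(ν i)| := by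
    rw [integral_sum_mul_eval (fun i => (hμL2 i).integrable one_le_two),
      integral_sum_mul_eval (fun i => (hνL2 i).integrable one_le_two), ← Finset.sum_sub_distrib]
    simp only [c, ← mul_sub, sign_mul_self]
  have key := sq_integral_sub_integral_mul_one_sub_tvDist_le (memLp_sum_mul_eval hμL2 c)
    (memLp_sum_mul_eval hνL2 c) (variance_sum_mul_eval_le hμL2 hc hμvar)
    (variance_sum_mul_eval_le hνL2 hc hνvar)
    (sub_nonneg.1 (hgap ▸ Finset.sum_nonneg fun i _ => abs_nonneg _))
  rw [hgap, Fintype.card_fin] at key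
  rw [← Real.sqrt_sq (by norm_num : (0 : ℝ) ≤ 4), ← Real.sqrt_mul (by norm_num)]
  exact Real.le_sqrt_of_sq_le (by nlinarith)

/-- If `P` and `Q` are product distributions on `ℝ^d` with per-coordinate variance at most `σ²`
and `d_TV(P,Q) ≤ 1/2`, then the `ℓ₁` distance between their means is at most `4√(dσ²)`. -/
theorem product_tv_mean_l1 (d : ℕ) (σ : ℝ) (hσ : 0 ≤ σ)
    (μ ν : Fin d → Measure ℝ)
    (hμprob : ∀ i, IsProbabilityMeasure (μ i)) (hνprob : ∀ i, IsProbabilityMeasure (ν i))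
    (hμL2 : ∀ i, MemLp id 2 (μ i)) (hνL2 : ∀ i, MemLp id 2 (ν i))
    (hμvar : ∀ i, ProbabilityTheory.variance id (μ i) ≤ σ ^ 2)
    (hνvar : ∀ i, ProbabilityTheory.variance id (ν i) ≤ σ ^ 2)
    (htv : tvDist (Measure.pi μ) (Measure.pi ν) ≤ 1 / 2) :
    ∑ i, |(∫ x, x ∂(μ i)) - ∫ x, x ∂(ν i)| ≤ 4 * Real.sqrt (d * σ ^ 2) :=
  product_tv_mean_l1_general d σ μ ν hμprob hνprob hμL2 hνL2 hμvar hνvar htv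
end

section
/- The difference of two (t, d, k)-piecewise polynomial probability mass functions on [k] can change sign at most 2td + 2t − 1 times, and consequently the VC dimension of the family of Scheffé sets of (t, d, k)-piecewise polynomial distributions is at most 2t(d+1). -/
/-- `f` is a `(t,d,k)`-piecewise polynomial on `{1,...,k}`: there is a partition of
`{1,...,k}` into `t` consecutive intervals, on each of which `f` agrees with a polynomial
of degree at most `d`. -/
def IsPWPoly (t d k : ℕ) (f : ℕ → ℝ) : Prop :=
  ∃ (a : Fin (t + 1) → ℕ) (p : Fin t → Polynomial ℝ),
    a 0 = 1 ∧ a (Fin.last t) = k + 1 ∧ Monotone a ∧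
    (∀ j, (p j).natDegree ≤ d) ∧
    ∀ j : Fin t, ∀ x : ℕ, a j.castSucc ≤ x → x < a j.succ → f x = (p j).eval (x : ℝ)

/-- `f` is a probability mass function on `{1,...,k}`. -/
def IsPMFOn (k : ℕ) (f : ℕ → ℝ) : Prop :=
  (∀ x ∈ Finset.Icc 1 k, 0 ≤ f x) ∧ ∑ x ∈ Finset.Icc 1 k, f x = 1

open Polynomial Set

section Aux


lemma ivt_root (p : Polynomial ℝ) {a b : ℝ} (hab : a < b) (h1 : p.eval a < 0)
    (h2 : 0 < p.eval b) : ∃ r ∈ Set.Ioo a b, p.eval r = 0 := by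
  have := intermediate_value_Ioo hab.le (p.continuous.continuousOn (s := Set.Icc a b))
  obtain ⟨r, hr, hr0⟩ := this ⟨h1, h2⟩
  exact ⟨r, hr, hr0⟩

lemma ivt_root' (p : Polynomial ℝ) {a b : ℝ} (hab : a < b) (h1 : 0 < p.eval a)
    (h2 : p.eval b < 0) : ∃ r ∈ Set.Ioo a b, p.eval r = 0 := by
  have := intermediate_value_Ioo' hab.le (p.continuous.continuousOn (s := Set.Icc a b))
  obtain ⟨r, hr, hr0⟩ := this ⟨h2, h1⟩
  exact ⟨r, hr, hr0⟩

lemma two_mem_card {s : Multiset ℝ} {r1 r2 : ℝ} (h1 : r1 ∈ s) (h2 : r2 ∈ s)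
    (hne : r1 ≠ r2) : 2 ≤ Multiset.card s := by
  have h2' : r2 ∈ s.erase r1 := (Multiset.mem_erase_of_ne (Ne.symm hne)).2 h2
  have hpos : 0 < Multiset.card (s.erase r1) := Multiset.card_pos_iff_exists_mem.2 ⟨r2, h2'⟩
  have hc : Multiset.card s = Multiset.card (s.erase r1) + 1 := by
    conv_lhs => rw [← Multiset.cons_erase h1]
    simp
  omega

lemma one_root (p : Polynomial ℝ) {a b : ℝ} (hab : a < b) (ha : p.eval a ≤ 0)
    (hb : 0 < p.eval b) (hp : p ≠ 0) {Q : ℝ → Prop} [DecidablePred Q]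
    (hQ : ∀ r, a ≤ r → r < b → Q r) : 1 ≤ Multiset.card (p.roots.filter Q) := by
  rcases eq_or_lt_of_le ha with h0 | hneg
  · have : a ∈ p.roots.filter Q := Multiset.mem_filter.2
      ⟨(Polynomial.mem_roots hp).2 h0, hQ a le_rfl hab⟩
    exact Multiset.card_pos_iff_exists_mem.2 ⟨a, this⟩
  · obtain ⟨r, hr, hr0⟩ := ivt_root p hab hneg hb
    have : r ∈ p.roots.filter Q := Multiset.mem_filter.2
      ⟨(Polynomial.mem_roots hp).2 hr0, hQ r hr.1.le hr.2⟩
    exact Multiset.card_pos_iff_exists_mem.2 ⟨r, this⟩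

lemma one_root' (p : Polynomial ℝ) {a b : ℝ} (hab : a < b) (ha : 0 < p.eval a)
    (hb : p.eval b ≤ 0) (hp : p ≠ 0) {Q : ℝ → Prop} [DecidablePred Q]
    (hQ : ∀ r, a < r → r ≤ b → Q r) : 1 ≤ Multiset.card (p.roots.filter Q) := by
  rcases eq_or_lt_of_le hb with h0 | hneg
  · have : b ∈ p.roots.filter Q := Multiset.mem_filter.2
      ⟨(Polynomial.mem_roots hp).2 h0, hQ b hab le_rfl⟩
    exact Multiset.card_pos_iff_exists_mem.2 ⟨b, this⟩
  · obtain ⟨r, hr, hr0⟩ := ivt_root' p hab ha hneg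
    have : r ∈ p.roots.filter Q := Multiset.mem_filter.2
      ⟨(Polynomial.mem_roots hp).2 hr0, hQ r hr.1 hr.2.le⟩
    exact Multiset.card_pos_iff_exists_mem.2 ⟨r, this⟩

lemma two_roots (p : Polynomial ℝ) {u v w : ℝ} (huv : u < v) (hvw : v < w)
    (hu : 0 < p.eval u) (hv : p.eval v ≤ 0) (hw : 0 < p.eval w)
    {Q : ℝ → Prop} [DecidablePred Q]
    (hQ : ∀ r, u < r → r < w → Q r) : 2 ≤ Multiset.card (p.roots.filter Q) := by
  have hp : p ≠ 0 := fun h => by simp [h] at hu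
  have memf : ∀ r, u < r → r < w → p.eval r = 0 → r ∈ p.roots.filter Q := fun r h1 h2 h0 =>
    Multiset.mem_filter.2 ⟨(Polynomial.mem_roots hp).2 h0, hQ r h1 h2⟩
  rcases eq_or_lt_of_le hv with h0 | hneg
  · by_cases hex : ∃ x, u < x ∧ x < w ∧ p.eval x < 0
    · obtain ⟨x, hx1, hx2, hx3⟩ := hex
      have hxv : x ≠ v := fun h => by rw [h] at hx3; linarith [h0.le]
      rcases lt_or_gt_of_ne hxv with hlt | hgt
      · obtain ⟨r, hr, hr0⟩ := ivt_root' p hx1 hu hx3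
        exact two_mem_card (memf r hr.1 (by linarith [hr.2]) hr0)
          (memf v huv hvw h0) (by have := hr.2; intro h; subst h; linarith)
      · obtain ⟨r, hr, hr0⟩ := ivt_root p hx2 hx3 hw
        exact two_mem_card (memf r (by linarith [hr.1]) hr.2 hr0)
          (memf v huv hvw h0) (by have := hr.1; intro h; subst h; linarith)
    · push_neg at hex
      have hmin : IsLocalMin (fun x => p.eval x) v := by
        have hmem : Set.Ioo u w ∈ nhds v := isOpen_Ioo.mem_nhds ⟨huv, hvw⟩
        refine Filter.eventually_of_mem hmem ?_
        intro x hx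
        simp only [h0]
        exact hex x hx.1 hx.2
      have hderiv : p.derivative.eval v = 0 := by
        have := IsLocalMin.deriv_eq_zero hmin
        rwa [Polynomial.deriv] at this
      have hd0 : p.derivative ≠ 0 := by
        intro h
        have h1 := Polynomial.eq_C_of_natDegree_eq_zero
          (Polynomial.natDegree_eq_zero_of_derivative_eq_zero h)
        rw [h1] at hu hv
        simp at hu hv
        linarith
      have hm : 2 ≤ p.rootMultiplicity v := by
        have h1 : 0 < Polynomial.rootMultiplicity v p.derivative :=
          (Polynomial.rootMultiplicity_pos hd0).2 hderiv
        have h2 := Polynomial.derivative_rootMultiplicity_of_root (p := p) (t := v) h0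
        omega
      have hcount : p.roots.count v = p.rootMultiplicity v := Polynomial.count_roots p
      have hQv : Q v := hQ v huv hvw
      have : (p.roots.filter Q).count v = p.roots.count v := by
        rw [Multiset.count_filter, if_pos hQv]
      calc 2 ≤ (p.roots.filter Q).count v := by omega
        _ ≤ Multiset.card (p.roots.filter Q) := Multiset.count_le_card _ _
  · obtain ⟨r1, hr1, hr10⟩ := ivt_root' p huv hu hneg
    obtain ⟨r2, hr2, hr20⟩ := ivt_root p hvw hneg hw
    exact two_mem_card (memf r1 hr1.1 (by linarith [hr1.2]) hr10)
      (memf r2 (by linarith [hr2.1]) hr2.2 hr20)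
      (by intro h; have := hr1.2; have := hr2.1; subst h; linarith)

lemma sum_card_filter_le (s : Multiset ℝ) (F : Finset ℕ) (P : ℕ → ℝ → Prop)
    [inst : ∀ j, DecidablePred (P j)]
    (h : ∀ j ∈ F, ∀ j' ∈ F, j ≠ j' → ∀ x, P j x → P j' x → False) :
    (∑ j ∈ F, Multiset.card (s.filter (P j))) ≤ Multiset.card s := by
  classical
  induction F using Finset.induction generalizing s with
  | empty => simp
  | @insert a F ha IH =>
    rw [Finset.sum_insert ha]
    have hsplit : Multiset.card (s.filter (P a)) +
        Multiset.card (s.filter (fun x => ¬ P a x)) = Multiset.card s := by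
      rw [← Multiset.card_add, Multiset.filter_add_not]
    have heq : ∀ j ∈ F, s.filter (P j) = (s.filter (fun x => ¬ P a x)).filter (P j) := by
      intro j hj
      rw [Multiset.filter_filter]
      apply Multiset.filter_congr
      intro x hx
      constructor
      · intro hPj
        exact ⟨hPj, fun hPa => h a (Finset.mem_insert_self a F) j
          (Finset.mem_insert_of_mem hj) (fun he => ha (he ▸ hj)) x hPa hPj⟩
      · exact fun hx => hx.1
    have : ∑ j ∈ F, Multiset.card (s.filter (P j)) =
        ∑ j ∈ F, Multiset.card ((s.filter (fun x => ¬ P a x)).filter (P j)) := by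
      apply Finset.sum_congr rfl; intro j hj; rw [heq j hj]
    rw [this]
    have hIH := IH (s.filter (fun x => ¬ P a x)) (fun j hj j' hj' hne x =>
      h j (Finset.mem_insert_of_mem hj) j' (Finset.mem_insert_of_mem hj') hne x)
    omega

lemma core (p : Polynomial ℝ) (n : ℕ) (hn : 0 < n) (z : ℕ → ℝ)
    (hz : ∀ i j, i < j → j ≤ n → z i < z j)
    (halt : ∀ j, j < n → (0 < p.eval (z j) ∧ p.eval (z (j+1)) ≤ 0) ∨
        (p.eval (z j) ≤ 0 ∧ 0 < p.eval (z (j+1)))) :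
    n ≤ p.natDegree := by
  classical
  have hp : p ≠ 0 := by
    rcases halt 0 hn with ⟨h1, _⟩ | ⟨_, h1⟩ <;>
      exact fun h => by rw [h] at h1; simp at h1
  set E : ℕ → Prop := fun j => p.eval (z j) ≤ 0 with hE
  have hEalt : ∀ j, j < n → (E j ↔ ¬ E (j+1)) := by
    intro j hj
    rcases halt j hj with ⟨h1, h2⟩ | ⟨h1, h2⟩ <;>
      simp only [hE] <;> constructor <;> intro h <;> first | linarith | (push_neg at h ⊢; linarith)
  set P : ℕ → ℝ → Prop := fun j x =>
    (if 0 < j then z (j-1) < x else z 0 ≤ x) ∧ (if j < n then x < z (j+1) else x ≤ z n)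
    with hP
  set J : Finset ℕ := (Finset.range (n+1)).filter E with hJ
  have hJmem : ∀ j, j ∈ J ↔ (j ≤ n ∧ E j) := by
    intro j; simp [hJ, Finset.mem_filter, Finset.mem_range]
  set g : ℕ → ℕ := fun i => if E i then i else i + 1 with hg
  have hgJ : ∀ i ∈ Finset.range n, g i ∈ J := by
    intro i hi
    simp only [Finset.mem_range] at hi
    by_cases h : E i
    · rw [hJmem]; simp only [hg, if_pos h]; exact ⟨by omega, h⟩
    · have hEi1 : E (i+1) := by
        have := hEalt i hi; tauto
      rw [hJmem]; simp only [hg, if_neg h]; exact ⟨by omega, hEi1⟩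
  have hcard := Finset.card_eq_sum_card_fiberwise hgJ
  rw [Finset.card_range] at hcard
  have hfib : ∀ j ∈ J, ((Finset.range n).filter (fun i => g i = j)).card ≤
      Multiset.card (p.roots.filter (P j)) := by
    intro j hj
    rw [hJmem] at hj
    obtain ⟨hjn, hjE⟩ := hj
    by_cases hj0 : j = 0
    · subst hj0
      have hsub : (Finset.range n).filter (fun i => g i = 0) ⊆ {0} := by
        intro i hi
        simp only [Finset.mem_filter, Finset.mem_range, hg] at hi
        obtain ⟨_, hgi⟩ := hi
        by_cases h : E i
        · rw [if_pos h] at hgi; simp [hgi]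
        · rw [if_neg h] at hgi; omega
      have h1 : ((Finset.range n).filter (fun i => g i = 0)).card ≤ 1 :=
        le_trans (Finset.card_le_card hsub) (by simp)
      have hb : 0 < p.eval (z 1) := by
        have h := (hEalt 0 hn).1 hjE
        simp only [hE] at h; exact not_le.1 h
      refine le_trans h1 (one_root p (hz 0 1 one_pos hn) hjE hb hp ?_)
      intro r h1 h2
      simp only [hP]
      rw [if_neg (by omega), if_pos hn]
      exact ⟨h1, h2⟩
    by_cases hjn' : j = n
    · have hsub : (Finset.range n).filter (fun i => g i = j) ⊆ {j-1} := by
        intro i hi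
        simp only [Finset.mem_filter, Finset.mem_range, hg] at hi
        obtain ⟨hilt, hgi⟩ := hi
        by_cases h : E i
        · rw [if_pos h] at hgi; omega
        · rw [if_neg h] at hgi; simp; omega
      have h1 : ((Finset.range n).filter (fun i => g i = j)).card ≤ 1 :=
        le_trans (Finset.card_le_card hsub) (by simp)
      have ha : 0 < p.eval (z (j-1)) := by
        have h := hEalt (j-1) (by omega)
        rw [(by omega : j - 1 + 1 = j)] at h
        have h2 : ¬ E (j-1) := fun hEn1 => (h.1 hEn1) hjE
        simp only [hE] at h2; exact not_le.1 h2
      refine le_trans h1 (one_root' p (hz (j-1) j (by omega) hjn) ha hjE hp ?_)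
      intro r h1 h2
      simp only [hP]
      rw [if_pos (by omega), if_neg (by omega), ← hjn']
      exact ⟨h1, h2⟩
    · -- interior
      have hj0' : 0 < j := by omega
      have hjlt : j < n := by omega
      have hsub : (Finset.range n).filter (fun i => g i = j) ⊆ insert (j-1) {j} := by
        intro i hi
        simp only [Finset.mem_filter, Finset.mem_range, hg] at hi
        obtain ⟨hilt, hgi⟩ := hi
        simp only [Finset.mem_insert, Finset.mem_singleton]
        by_cases h : E i
        · rw [if_pos h] at hgi; omega
        · rw [if_neg h] at hgi; omega
      have h1 : ((Finset.range n).filter (fun i => g i = j)).card ≤ 2 :=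
        le_trans (Finset.card_le_card hsub)
          (le_trans (Finset.card_insert_le _ _) (by simp))
      have hu : 0 < p.eval (z (j-1)) := by
        have h := hEalt (j-1) (by omega)
        rw [(by omega : j - 1 + 1 = j)] at h
        have h2 : ¬ E (j-1) := fun hEj1 => (h.1 hEj1) hjE
        simp only [hE] at h2; exact not_le.1 h2
      have hw : 0 < p.eval (z (j+1)) := by
        have h := (hEalt j hjlt).1 hjE
        simp only [hE] at h; exact not_le.1 h
      refine le_trans h1 (two_roots p (hz (j-1) j (by omega) hjn)
        (hz j (j+1) (by omega) (by omega)) hu hjE hw ?_)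
      intro r h1 h2
      simp only [hP]
      rw [if_pos hj0', if_pos hjlt]
      exact ⟨h1, h2⟩
  have hdisj : ∀ j ∈ J, ∀ j' ∈ J, j ≠ j' → ∀ x, P j x → P j' x → False := by
    have key : ∀ j j', j ∈ J → j' ∈ J → j < j' → ∀ x, P j x → P j' x → False := by
      intro j j' hj hj' hlt x hx hx'
      rw [hJmem] at hj hj'
      have hsep : j + 2 ≤ j' := by
        by_contra hc
        have hjj : j' = j + 1 := by omega
        have := (hEalt j (by omega)).1 hj.2
        rw [← hjj] at this
        exact this hj'.2
      have h1 : x < z (j+1) := by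
        have := hx.2
        rwa [if_pos (by omega : j < n)] at this
      have h2 : z (j'-1) < x := by
        have := hx'.1
        rwa [if_pos (by omega : 0 < j')] at this
      have h3 : z (j+1) ≤ z (j'-1) := by
        rcases eq_or_lt_of_le (by omega : j + 1 ≤ j' - 1) with he | hlt2
        · rw [he]
        · exact (hz (j+1) (j'-1) hlt2 (by omega)).le
      linarith
    intro j hj j' hj' hne x hx hx'
    rcases lt_or_gt_of_ne hne with h | h
    · exact key j j' hj hj' h x hx hx'
    · exact key j' j hj' hj h x hx' hx
  calc n = ∑ j ∈ J, ((Finset.range n).filter (fun i => g i = j)).card := hcard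
    _ ≤ ∑ j ∈ J, Multiset.card (p.roots.filter (P j)) := Finset.sum_le_sum hfib
    _ ≤ Multiset.card p.roots := sum_card_filter_le p.roots J P hdisj
    _ ≤ p.natDegree := Polynomial.card_roots' p

lemma exists_piece_nat (t k : ℕ) (a : ℕ → ℕ) (ha0 : a 0 = 1) (hat : a t = k+1)
    (hmono : Monotone a) (ht : 0 < t) (x : ℕ) (hx1 : 1 ≤ x) (hxk : x ≤ k) :
    ∃ j, j < t ∧ a j ≤ x ∧ x < a (j+1) := by
  classical
  set F := (Finset.range t).filter (fun j => a j ≤ x) with hF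
  have h0F : 0 ∈ F := by
    simp only [hF, Finset.mem_filter, Finset.mem_range, ha0]
    exact ⟨ht, hx1⟩
  set j := F.max' ⟨0, h0F⟩ with hj
  have hjF : j ∈ F := F.max'_mem _
  simp only [hF, Finset.mem_filter, Finset.mem_range] at hjF
  refine ⟨j, hjF.1, hjF.2, ?_⟩
  by_contra hcon
  push_neg at hcon
  by_cases hlt : j + 1 < t
  · have : j + 1 ∈ F := by
      simp only [hF, Finset.mem_filter, Finset.mem_range]
      exact ⟨hlt, hcon⟩
    have := F.le_max' _ this
    omega
  · have hjt : j + 1 = t := by omega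
    rw [hjt, hat] at hcon
    omega

lemma exists_piece (t k : ℕ) (ht : 0 < t) (a : Fin (t+1) → ℕ) (ha0 : a 0 = 1)
    (haL : a (Fin.last t) = k+1) (hmono : Monotone a) (x : ℕ) (hx1 : 1 ≤ x) (hxk : x ≤ k) :
    ∃ j : Fin t, a j.castSucc ≤ x ∧ x < a j.succ := by
  set a' : ℕ → ℕ := fun n => a ⟨min n t, by omega⟩ with ha'
  have ha'0 : a' 0 = 1 := by
    have : (⟨min 0 t, by omega⟩ : Fin (t+1)) = 0 := by
      ext; simp
    rw [ha']; simp only [this, ha0]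
  have ha't : a' t = k + 1 := by
    have : (⟨min t t, by omega⟩ : Fin (t+1)) = Fin.last t := by
      ext; simp [Fin.last]
    rw [ha']; simp only [this, haL]
  have ha'mono : Monotone a' := by
    intro m n hmn
    exact hmono (by simp only [Fin.mk_le_mk]; omega)
  obtain ⟨j, hjt, h1, h2⟩ := exists_piece_nat t k a' ha'0 ha't ha'mono ht x hx1 hxk
  refine ⟨⟨j, hjt⟩, ?_, ?_⟩
  · have : (⟨j, hjt⟩ : Fin t).castSucc = (⟨min j t, by omega⟩ : Fin (t+1)) := by
      ext; simp [Fin.castSucc, Fin.castAdd, Fin.castLE]; omega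
    rw [this]; exact h1
  · have : (⟨j, hjt⟩ : Fin t).succ = (⟨min (j+1) t, by omega⟩ : Fin (t+1)) := by
      ext; simp [Fin.succ]; omega
    rw [this]; exact h2

lemma piece_mono {t : ℕ} (a : Fin (t+1) → ℕ) (hmono : Monotone a) {j j' : Fin t} {x y : ℕ}
    (hj1 : a j.castSucc ≤ x) (hj2 : x < a j.succ) (hj1' : a j'.castSucc ≤ y)
    (hj2' : y < a j'.succ) (hxy : x ≤ y) : (j : ℕ) ≤ (j' : ℕ) := by
  by_contra h
  push_neg at h
  have hle : j'.succ ≤ j.castSucc := by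
    simp only [Fin.le_def, Fin.val_succ, Fin.coe_castSucc]
    omega
  have := hmono hle
  omega

lemma main_alt (t d k : ℕ) (ht : 0 < t) (H H' : ℕ → ℝ)
    (hH : IsPWPoly t d k H) (hH' : IsPWPoly t d k H')
    (x : ℕ → ℕ)
    (hx : ∀ i i', i < i' → i' ≤ 2*t*d+2*t → x i < x i')
    (hxmem : ∀ i, i ≤ 2*t*d+2*t → 1 ≤ x i ∧ x i ≤ k)
    (halt : ∀ i, i < 2*t*d+2*t →
      (0 < H (x i) - H' (x i) ∧ H (x (i+1)) - H' (x (i+1)) ≤ 0) ∨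
      (H (x i) - H' (x i) ≤ 0 ∧ 0 < H (x (i+1)) - H' (x (i+1)))) : False := by
  classical
  set N := 2*t*d+2*t with hN
  obtain ⟨a, p, ha0, haL, hamono, hpdeg, hap⟩ := hH
  obtain ⟨b, q, hb0, hbL, hbmono, hqdeg, hbq⟩ := hH'
  have hex : ∀ i, ∃ jj : Fin t × Fin t, i ≤ N →
      ((a jj.1.castSucc ≤ x i ∧ x i < a jj.1.succ) ∧
       (b jj.2.castSucc ≤ x i ∧ x i < b jj.2.succ)) := by
    intro i
    by_cases hi : i ≤ N
    · obtain ⟨j1, hj1⟩ := exists_piece t k ht a ha0 haL hamono (x i)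
        (hxmem i hi).1 (hxmem i hi).2
      obtain ⟨j2, hj2⟩ := exists_piece t k ht b hb0 hbL hbmono (x i)
        (hxmem i hi).1 (hxmem i hi).2
      exact ⟨⟨j1, j2⟩, fun _ => ⟨hj1, hj2⟩⟩
    · exact ⟨⟨⟨0, ht⟩, ⟨0, ht⟩⟩, fun h => absurd h hi⟩
  choose J hJ using hex
  set φ : ℕ → ℕ := fun i => ((J i).1 : ℕ) + ((J i).2 : ℕ) with hφ
  have hmono1 : ∀ i i', i ≤ i' → i' ≤ N → ((J i).1 : ℕ) ≤ ((J i').1 : ℕ) := by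
    intro i i' hii hi'
    have h1 := (hJ i (le_trans hii hi')).1
    have h2 := (hJ i' hi').1
    have hxii : x i ≤ x i' := by
      rcases eq_or_lt_of_le hii with he | hlt
      · rw [he]
      · exact (hx i i' hlt hi').le
    exact piece_mono a hamono h1.1 h1.2 h2.1 h2.2 hxii
  have hmono2 : ∀ i i', i ≤ i' → i' ≤ N → ((J i).2 : ℕ) ≤ ((J i').2 : ℕ) := by
    intro i i' hii hi'
    have h1 := (hJ i (le_trans hii hi')).2
    have h2 := (hJ i' hi').2
    have hxii : x i ≤ x i' := by
      rcases eq_or_lt_of_le hii with he | hlt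
      · rw [he]
      · exact (hx i i' hlt hi').le
    exact piece_mono b hbmono h1.1 h1.2 h2.1 h2.2 hxii
  have hstep : ∀ i, i + (d+1) ≤ N → φ i < φ (i + (d+1)) := by
    intro i hiN
    by_contra hcon
    push_neg at hcon
    -- all piece indices equal on [i, i+d+1]
    have heq : ∀ m, m ≤ d+1 → J (i+m) = J i := by
      intro m hm
      have e11 := hmono1 i (i+m) (by omega) (by omega)
      have e12 := hmono1 (i+m) (i+(d+1)) (by omega) (by omega)
      have e21 := hmono2 i (i+m) (by omega) (by omega)
      have e22 := hmono2 (i+m) (i+(d+1)) (by omega) (by omega)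
      have hφle : φ (i+(d+1)) ≤ φ i := hcon
      simp only [hφ] at hφle
      have hv1 : ((J (i+m)).1 : ℕ) = ((J i).1 : ℕ) := by omega
      have hv2 : ((J (i+m)).2 : ℕ) = ((J i).2 : ℕ) := by omega
      have : (J (i+m)).1 = (J i).1 := Fin.ext hv1
      have h2 : (J (i+m)).2 = (J i).2 := Fin.ext hv2
      exact Prod.ext this h2
    set r := p (J i).1 - q (J i).2 with hr
    have hrdeg : r.natDegree ≤ d :=
      le_trans (Polynomial.natDegree_sub_le _ _) (max_le (hpdeg _) (hqdeg _))
    have hev : ∀ m, m ≤ d+1 → r.eval ((x (i+m) : ℝ)) = H (x (i+m)) - H' (x (i+m)) := by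
      intro m hm
      have hJm := hJ (i+m) (by omega)
      rw [heq m hm] at hJm
      have h1 := hap (J i).1 (x (i+m)) hJm.1.1 hJm.1.2
      have h2 := hbq (J i).2 (x (i+m)) hJm.2.1 hJm.2.2
      rw [hr, Polynomial.eval_sub, h1, h2]
    have hcore := core r (d+1) (by omega) (fun m => (x (i+m) : ℝ))
      (by
        intro m m' hmm hm'
        have := hx (i+m) (i+m') (by omega) (by omega)
        exact_mod_cast this)
      (by
        intro m hm
        have h1 := hev m (by omega)
        have h2 := hev (m+1) (by omega)
        have h3 := halt (i+m) (by omega)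
        have e : i + m + 1 = i + (m+1) := by omega
        rw [e] at h3
        rw [show i + (m+1) = i + m + 1 from by omega] at h2 ⊢
        rw [show (i + m + 1 : ℕ) = i + (m+1) from by omega] at h2 ⊢
        rcases h3 with ⟨hl, hrr⟩ | ⟨hl, hrr⟩
        · left; rw [h1, h2]; exact ⟨hl, hrr⟩
        · right; rw [h1, h2]; exact ⟨hl, hrr⟩)
    omega
  have hiter : ∀ m, m ≤ 2*t-1 → m ≤ φ (m*(d+1)) := by
    intro m
    induction m with
    | zero => intro _; omega
    | succ m IH =>
      intro hm
      have h1 := IH (by omega)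
      have hprod : (m+1)*(d+1) ≤ (2*t-1)*(d+1) :=
        Nat.mul_le_mul_right _ (by omega)
      have hprod2 : (2*t-1)*(d+1) + (d+1) = 2*t*d+2*t := by
        have : (2*t-1) + 1 = 2*t := by omega
        calc (2*t-1)*(d+1) + (d+1) = ((2*t-1)+1)*(d+1) := by ring
          _ = 2*t*(d+1) := by rw [this]
          _ = 2*t*d+2*t := by ring
      have h2 := hstep (m*(d+1)) (by
        have : m*(d+1) + (d+1) = (m+1)*(d+1) := by ring
        omega)
      have e : m*(d+1) + (d+1) = (m+1)*(d+1) := by ring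
      rw [e] at h2
      omega
  have hfin := hiter (2*t-1) le_rfl
  have hbound : φ ((2*t-1)*(d+1)) ≤ (t-1) + (t-1) := by
    have h1 := ((J ((2*t-1)*(d+1))).1).isLt
    have h2 := ((J ((2*t-1)*(d+1))).2).isLt
    simp only [hφ]
    omega
  omega

end Aux

/-- (a) The difference of two `(t,d,k)`-piecewise polynomial pmfs changes sign at most
`2td + 2t − 1` times: there is no strictly increasing sequence of `2td + 2t + 1` points
in `{1,...,k}` on which the difference alternates sign `2td + 2t` times.
(b) Consequently the VC dimension of the family of Scheffé sets of `(t,d,k)`-piecewise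
polynomial distributions is at most `2t(d+1)`: no set of more than `2t(d+1)` points of
`{1,...,k}` is shattered by the Scheffé sets. -/
theorem piecewise_poly_sign_changes_and_vc (t d k : ℕ) (ht : 0 < t) :
    (∀ H H' : ℕ → ℝ, IsPWPoly t d k H → IsPWPoly t d k H' →
      IsPMFOn k H → IsPMFOn k H' →
      ∀ x : Fin (2 * t * d + 2 * t + 1) → ℕ, StrictMono x →
        (∀ i, x i ∈ Finset.Icc 1 k) →
        ¬ (∀ i : Fin (2 * t * d + 2 * t),
            (H (x i.castSucc) - H' (x i.castSucc)) * (H (x i.succ) - H' (x i.succ)) < 0)) ∧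
    (∀ S : Finset ℕ, (↑S : Set ℕ) ⊆ Set.Icc 1 k →
      (∀ T ⊆ S, ∃ H H' : ℕ → ℝ, IsPWPoly t d k H ∧ IsPWPoly t d k H' ∧
        IsPMFOn k H ∧ IsPMFOn k H' ∧ ∀ x ∈ S, (x ∈ T ↔ H' x < H x)) →
      S.card ≤ 2 * t * (d + 1)) := by
  constructor
  · intro H H' hH hH' _ _ xf hxmono hxmem hprod
    set x' : ℕ → ℕ := fun i => xf ⟨min i (2*t*d+2*t), by omega⟩ with hx'
    refine main_alt t d k ht H H' hH hH' x' ?_ ?_ ?_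
    · intro i i' hii hi'
      simp only [hx']
      apply hxmono
      simp only [Fin.mk_lt_mk]
      omega
    · intro i hi
      have := hxmem ⟨min i (2*t*d+2*t), by omega⟩
      simp only [Finset.mem_Icc] at this
      simp only [hx']
      exact this
    · intro i hi
      have h := hprod ⟨i, hi⟩
      have e1 : x' i = xf (Fin.castSucc ⟨i, hi⟩) := by
        simp only [hx']
        congr 1
        ext
        simp [Fin.castSucc, Fin.castAdd, Fin.castLE]
        omega
      have e2 : x' (i+1) = xf (Fin.succ ⟨i, hi⟩) := by
        simp only [hx']
        congr 1
        ext
        simp [Fin.succ]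
        omega
      rw [e1, e2]
      rcases mul_neg_iff.1 h with ⟨h1, h2⟩ | ⟨h1, h2⟩
      · exact Or.inl ⟨h1, h2.le⟩
      · exact Or.inr ⟨h1.le, h2⟩
  · intro S hS hshatter
    by_contra hc
    push_neg at hc
    set N := 2*t*d+2*t with hN
    have hcard : N + 1 ≤ S.card := by
      have : 2*t*(d+1) = N := by rw [hN]; ring
      omega
    set x : ℕ → ℕ := fun i => S.orderEmbOfFin rfl ⟨min i N, by omega⟩ with hx
    have hxS : ∀ i, x i ∈ S := by
      intro i
      simp only [hx]
      exact Finset.orderEmbOfFin_mem S rfl _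
    have hxmono : ∀ i i', i < i' → i' ≤ N → x i < x i' := by
      intro i i' hii hi'
      simp only [hx]
      apply (S.orderEmbOfFin rfl).strictMono
      simp only [Fin.mk_lt_mk]
      omega
    set T : Finset ℕ :=
      ((Finset.range (N+1)).filter (fun i => Even i)).image x with hT
    have hTsub : T ⊆ S := by
      intro y hy
      simp only [hT, Finset.mem_image] at hy
      obtain ⟨i, _, hiy⟩ := hy
      rw [← hiy]; exact hxS i
    obtain ⟨H, H', hH, hH', _, _, hkey⟩ := hshatter T hTsub
    have hmemT : ∀ i, i ≤ N → (x i ∈ T ↔ Even i) := by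
      intro i hi
      constructor
      · intro hmem
        simp only [hT, Finset.mem_image, Finset.mem_filter, Finset.mem_range] at hmem
        obtain ⟨i', ⟨hi'N, hi'even⟩, hii⟩ := hmem
        have : i' = i := by
          by_contra hne
          rcases lt_or_gt_of_ne hne with hlt | hgt
          · exact absurd hii (ne_of_lt (hxmono i' i hlt hi))
          · exact absurd hii.symm (ne_of_lt (hxmono i i' hgt (by omega)))
        rwa [← this]
      · intro heven
        simp only [hT, Finset.mem_image, Finset.mem_filter, Finset.mem_range]
        exact ⟨i, ⟨by omega, heven⟩, rfl⟩
    refine main_alt t d k ht H H' hH hH' x hxmono ?_ ?_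
    · intro i _
      have := hS (hxS i)
      simpa using this
    · intro i hi
      have hD : ∀ m, m ≤ N → (Even m → 0 < H (x m) - H' (x m)) ∧
          (¬ Even m → H (x m) - H' (x m) ≤ 0) := by
        intro m hm
        have h1 := hkey (x m) (hxS m)
        rw [hmemT m hm] at h1
        constructor
        · intro he
          have := h1.1 he
          linarith
        · intro hne
          have : ¬ H' (x m) < H (x m) := fun hh => hne (h1.2 hh)
          push_neg at this
          linarith
      by_cases he : Even i
      · left
        exact ⟨(hD i (by omega)).1 he,
          (hD (i+1) (by omega)).2 (by simp [Nat.even_add_one, he])⟩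
      · right
        exact ⟨(hD i (by omega)).2 he,
          (hD (i+1) (by omega)).1 (by simp [Nat.even_add_one, he])⟩
end

section
/- For univariate Gaussians, with β = α, γ = log(1 + α/2), and the grid C_α = {N(β e^{γn} m, e^{2γn}) : n, m ∈ Z}, every Gaussian N(μ, σ²) with σ > 0 has some element of C_α within total variation distance α, given the bound d_TV(N(μ,σ²), N(μ̃,σ̃²)) ≤ (3/2)·|σ̃² − σ²|/σ̃² + |μ̃ − μ|/(2σ̃). -/
open MeasureTheory ProbabilityTheory

/-- With `β = α`, `γ = log(1 + α/2)`, and the grid `{N(β e^{γn} m, e^{2γn}) : n, m ∈ ℤ}`,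
every univariate Gaussian `N(μ, σ²)` is within TV distance `α` of some grid element,
assuming the Devroye–Mehrabian–Reddad upper bound
`d_TV(N(μ,σ²), N(μ̃,σ̃²)) ≤ (3/2)|σ̃² − σ²|/σ̃² + |μ̃ − μ|/(2σ̃)`. -/
theorem gaussian_grid_cover (α : ℝ) (hα : 0 < α)
    (DMR : ∀ (μ μt σ σt : ℝ), 0 < σ → 0 < σt →
      tvDist (gaussianReal μ (Real.toNNReal (σ ^ 2)))
          (gaussianReal μt (Real.toNNReal (σt ^ 2)))
        ≤ (3 / 2) * |σt ^ 2 - σ ^ 2| / σt ^ 2 + |μt - μ| / (2 * σt)) :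
    ∀ (μ σ : ℝ), 0 < σ → ∃ n m : ℤ,
      tvDist (gaussianReal μ (Real.toNNReal (σ ^ 2)))
          (gaussianReal (α * Real.exp (Real.log (1 + α / 2) * n) * m)
            (Real.toNNReal ((Real.exp (Real.log (1 + α / 2) * n)) ^ 2))) ≤ α := by
  intro μ σ hσ
  set γ : ℝ := Real.log (1 + α / 2) with hγdef
  have hγ : 0 < γ := Real.log_pos (by linarith)
  set n : ℤ := round (Real.log σ / γ) with hn
  set σt : ℝ := Real.exp (γ * n) with hσtdef
  have hσtpos : 0 < σt := Real.exp_pos _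
  set m : ℤ := round (μ / (α * σt)) with hm
  refine ⟨n, m, le_trans (DMR μ (α * σt * m) σ σt hσ hσtpos) ?_⟩
  -- bound on the variance term
  have hr : |γ * (n : ℝ) - Real.log σ| ≤ γ / 2 := by
    have h1 : |(n : ℝ) - Real.log σ / γ| ≤ 1 / 2 := by
      rw [abs_sub_comm]; exact abs_sub_round _
    have h2 : γ * (n : ℝ) - Real.log σ = γ * ((n : ℝ) - Real.log σ / γ) := by
      field_simp
    rw [h2, abs_mul, abs_of_pos hγ]
    nlinarith [abs_nonneg ((n : ℝ) - Real.log σ / γ)]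
  have hrr := abs_le.mp hr
  have hexpγ : Real.exp γ = 1 + α / 2 := Real.exp_log (by linarith)
  have e1 : σt ^ 2 = Real.exp (γ * n + γ * n) := by
    rw [hσtdef, pow_two, ← Real.exp_add]
  have e2 : σ ^ 2 = Real.exp (Real.log σ + Real.log σ) := by
    rw [← Real.exp_log hσ, pow_two, ← Real.exp_add, Real.exp_log hσ]
  have hub : σt ^ 2 ≤ Real.exp γ * σ ^ 2 := by
    rw [e1, e2, ← Real.exp_add]
    exact Real.exp_le_exp.mpr (by linarith [hrr.2])
  have hlb : σ ^ 2 ≤ Real.exp γ * σt ^ 2 := by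
    rw [e1, e2, ← Real.exp_add]
    exact Real.exp_le_exp.mpr (by linarith [hrr.1])
  have hvar : |σt ^ 2 - σ ^ 2| ≤ (α / 2) * σt ^ 2 := by
    rw [abs_le]
    constructor
    · nlinarith
    · rcases le_or_gt (σ ^ 2) (σt ^ 2) with hc | hc
      · nlinarith [mul_nonneg hα.le (sub_nonneg.mpr hc)]
      · nlinarith [sq_nonneg σt]
  have hvar' : (3 / 2) * |σt ^ 2 - σ ^ 2| / σt ^ 2 ≤ 3 * α / 4 := by
    rw [div_le_iff₀ (by positivity)]
    nlinarith
  -- bound on the mean term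
  have hmean : |α * σt * m - μ| ≤ α * σt / 2 := by
    have h1 : |(m : ℝ) - μ / (α * σt)| ≤ 1 / 2 := by
      rw [abs_sub_comm]; exact abs_sub_round _
    have h2 : α * σt * m - μ = (α * σt) * ((m : ℝ) - μ / (α * σt)) := by
      field_simp
    rw [h2, abs_mul, abs_of_pos (by positivity)]
    nlinarith [abs_nonneg ((m : ℝ) - μ / (α * σt)), mul_pos hα hσtpos]
  have hmean' : |α * σt * m - μ| / (2 * σt) ≤ α / 4 := by
    rw [div_le_iff₀ (by positivity)]
    nlinarith
  linarith
end

section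
/- Let q: H × X^n → R be a score function such that for every fixed r ∈ H, q(·, r) changes by at most Δ when one element of the dataset is changed. Then for every pair of neighboring datasets D, D', the distribution that selects r with probability proportional to exp(ε·q(D,r)/(2Δ)) and the corresponding distribution for D' satisfy: for all r, the ratio of probabilities is between e^{−ε} and e^{ε} (i.e., the exponential mechanism is ε-differentially private), assuming H is finite. -/
/-! Shifting every score by at most `δ` changes each exponential weight, and hence the
normalizing constant, by a factor of at most `e^δ`; the selection probability therefore
changes by at most `e^{2δ}`. With scores `ε q / (2Δ)` and sensitivity `Δ`, `δ = ε / 2`. -/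

/-- Two datasets are neighboring if they differ in at most one coordinate. -/
def Neighboring {X : Type*} {n : ℕ} (D D' : Fin n → X) : Prop :=
  ∃ i, ∀ j, j ≠ i → D j = D' j

open Real Finset

lemma exp_div_sum_exp_le_exp_two_mul_mul {H : Type*} [Fintype H] {f g : H → ℝ} {δ : ℝ}
    (h : ∀ s, |f s - g s| ≤ δ) (r : H) :
    exp (f r) / ∑ s, exp (f s) ≤ exp (2 * δ) * (exp (g r) / ∑ s, exp (g s)) := by
  have hf : 0 < ∑ s, exp (f s) := sum_pos (fun s _ => exp_pos _) ⟨r, mem_univ r⟩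
  have hg : 0 < ∑ s, exp (g s) := sum_pos (fun s _ => exp_pos _) ⟨r, mem_univ r⟩
  have hnum : exp (f r) ≤ exp δ * exp (g r) := by
    rw [← exp_add]
    exact exp_le_exp.2 (by linarith [(abs_le.1 (h r)).2])
  have hden : ∑ s, exp (g s) ≤ exp δ * ∑ s, exp (f s) := by
    rw [mul_sum]
    gcongr with s
    rw [← exp_add]
    exact exp_le_exp.2 (by linarith [(abs_le.1 (h s)).1])
  calc exp (f r) / ∑ s, exp (f s)
      ≤ exp δ * exp (g r) / ∑ s, exp (f s) := by gcongr
    _ = exp (2 * δ) * (exp (g r) / (exp δ * ∑ s, exp (f s))) := by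
        rw [two_mul, exp_add]
        field_simp
    _ ≤ exp (2 * δ) * (exp (g r) / ∑ s, exp (g s)) := by gcongr

lemma abs_mul_div_sub_mul_div_le {a b ε Δ : ℝ} (hε : 0 ≤ ε) (h : |a - b| ≤ Δ) :
    |ε * a / (2 * Δ) - ε * b / (2 * Δ)| ≤ ε / 2 := by
  have hΔ : 0 ≤ Δ := (abs_nonneg _).trans h
  rw [← sub_div, ← mul_sub, abs_div, abs_mul, abs_of_nonneg hε,
    abs_of_nonneg (by positivity : (0 : ℝ) ≤ 2 * Δ)]
  calc ε * |a - b| / (2 * Δ) ≤ ε * Δ / (2 * Δ) := by gcongr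
    _ = ε / 2 * (Δ / Δ) := by ring
    _ ≤ ε / 2 := mul_le_of_le_one_right (by positivity) (div_self_le_one Δ)

theorem exponential_mechanism_private_general {X H : Type*} [Fintype H]
    (n : ℕ) (ε Δ : ℝ) (hε : 0 ≤ ε)
    (q : (Fin n → X) → H → ℝ)
    (hsens : ∀ D D' : Fin n → X, Neighboring D D' → ∀ r : H, |q D r - q D' r| ≤ Δ) :
    ∀ D D' : Fin n → X, Neighboring D D' → ∀ r : H,
      Real.exp (-ε) *
          (Real.exp (ε * q D' r / (2 * Δ)) / ∑ r', Real.exp (ε * q D' r' / (2 * Δ)))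
        ≤ Real.exp (ε * q D r / (2 * Δ)) / ∑ r', Real.exp (ε * q D r' / (2 * Δ)) ∧
      Real.exp (ε * q D r / (2 * Δ)) / ∑ r', Real.exp (ε * q D r' / (2 * Δ))
        ≤ Real.exp ε *
          (Real.exp (ε * q D' r / (2 * Δ)) / ∑ r', Real.exp (ε * q D' r' / (2 * Δ))) := by
  intro D D' hN r
  have hclose : ∀ s, |ε * q D s / (2 * Δ) - ε * q D' s / (2 * Δ)| ≤ ε / 2 :=
    fun s => abs_mul_div_sub_mul_div_le hε (hsens D D' hN s)
  have hclose' : ∀ s, |ε * q D' s / (2 * Δ) - ε * q D s / (2 * Δ)| ≤ ε / 2 :=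
    fun s => abs_sub_comm (ε * q D s / (2 * Δ)) _ ▸ hclose s
  have hε2 : 2 * (ε / 2) = ε := mul_div_cancel₀ ε two_ne_zero
  have hle := exp_div_sum_exp_le_exp_two_mul_mul hclose r
  have hge := exp_div_sum_exp_le_exp_two_mul_mul hclose' r
  rw [hε2] at hle hge
  refine ⟨?_, hle⟩
  rwa [exp_neg, inv_mul_le_iff₀ (exp_pos ε)]

/-- The exponential mechanism is `ε`-differentially private: if `q(·, r)` has sensitivity
at most `Δ` for each outcome `r`, then for neighboring datasets `D, D'` the probability of
selecting any outcome `r` (proportional to `exp(ε q(D,r)/(2Δ))`) changes by a factor of at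
most `e^ε` in either direction. -/
theorem exponential_mechanism_private {X H : Type*} [Fintype H] [Nonempty H]
    (n : ℕ) (ε Δ : ℝ) (hε : 0 ≤ ε) (hΔ : 0 < Δ)
    (q : (Fin n → X) → H → ℝ)
    (hsens : ∀ D D' : Fin n → X, Neighboring D D' → ∀ r : H, |q D r - q D' r| ≤ Δ) :
    ∀ D D' : Fin n → X, Neighboring D D' → ∀ r : H,
      Real.exp (-ε) *
          (Real.exp (ε * q D' r / (2 * Δ)) / ∑ r', Real.exp (ε * q D' r' / (2 * Δ)))
        ≤ Real.exp (ε * q D r / (2 * Δ)) / ∑ r', Real.exp (ε * q D r' / (2 * Δ)) ∧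
      Real.exp (ε * q D r / (2 * Δ)) / ∑ r', Real.exp (ε * q D r' / (2 * Δ))
        ≤ Real.exp ε *
          (Real.exp (ε * q D' r / (2 * Δ)) / ∑ r', Real.exp (ε * q D' r' / (2 * Δ))) :=
  exponential_mechanism_private_general n ε Δ hε q hsens
end
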